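/- Let W = (W_{kl}) be an r×r unitary matrix, let θ ∈ ℝ, let D = diag(e^{iθ}, e^{−iθ}), and define Ṽ_k = D*·(∑_{l=1}^r W_{kl} V_l)·D for k = 1, …, r. Then each Ṽ_k is traceless, ∑_k [Ṽ_k, Ṽ_k*] is diagonal, and the quantities Σ, Δ, δ, |z₁|, |z₂|, and z₁·conj(z₂)² computed from the family (Ṽ_k) coincide with those computed from (V_k). (In particular, Σ, Δ, δ, r₁ = |z₁|, r₂ = 4|z₂| and the phase φ₁ − 2φ₂ mod 2π depend only on the Lindblad generator.) -/

import Mathlib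

/-!
All quantities in the statement, and the commutator sum
`(∑ₖ [Vₖ, Vₖ*]) i j = ∑ₘ (G(j m, i m) − G(m i, m j))`, are read off the form
`G(i j, i' j') = ∑ₖ conj (Vₖ i j) · Vₖ i' j'` (`entryGram`) on the entry vectors `(Vₖ i j)ₖ ∈ ℂʳ`.
Unitary mixing acts on every entry vector by `W`, which preserves inner products, so it leaves `G`
unchanged. Conjugation by `diag d` multiplies `G(i j, i' j')` by `dᵢ conj(dⱼ) conj(dᵢ') dⱼ'`. When all
`|dᵢ| = 1` this factor is `1` on the diagonal values `∑ₖ |Vₖ i j|²` of `G` and `conj(dᵢ) dⱼ` on the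
`(i, j)` entry of the commutator sum; for `d = (e^{iθ}, e^{−iθ})` it is `e^{4iθ}` on `z₁` and
`e^{2iθ}` on `z₂`, so it cancels in `z₁ conj(z₂)²`.
-/

open Matrix Complex

/-- `Σ = ∑ₖ (|vₖ|² + |wₖ|²)`. -/
noncomputable def SigOf {r : ℕ} (V : Fin r → Matrix (Fin 2) (Fin 2) ℂ) : ℝ :=
  ∑ k, (‖V k 0 1‖ ^ 2 + ‖V k 1 0‖ ^ 2)

/-- `Δ = ∑ₖ (|vₖ|² − |wₖ|²)`. -/
noncomputable def DeltaOf {r : ℕ} (V : Fin r → Matrix (Fin 2) (Fin 2) ℂ) : ℝ :=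
  ∑ k, (‖V k 0 1‖ ^ 2 - ‖V k 1 0‖ ^ 2)

/-- `δ = ∑ₖ (2|uₖ|² − (|vₖ|² + |wₖ|²)/2)`. -/
noncomputable def deltaOf {r : ℕ} (V : Fin r → Matrix (Fin 2) (Fin 2) ℂ) : ℝ :=
  ∑ k, (2 * ‖V k 0 0‖ ^ 2 -
    (‖V k 0 1‖ ^ 2 + ‖V k 1 0‖ ^ 2) / 2)

/-- `z₁ = i ∑ₖ conj(vₖ)·wₖ`. -/
noncomputable def z1Of {r : ℕ} (V : Fin r → Matrix (Fin 2) (Fin 2) ℂ) : ℂ :=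
  Complex.I * ∑ k, (starRingEnd ℂ) (V k 0 1) * V k 1 0

/-- `z₂ = ∑ₖ conj(uₖ)·wₖ`. -/
noncomputable def z2Of {r : ℕ} (V : Fin r → Matrix (Fin 2) (Fin 2) ℂ) : ℂ :=
  ∑ k, (starRingEnd ℂ) (V k 0 0) * V k 1 0

section EntryGram

variable {R ι n : Type*} [CommRing R] [StarRing R] [Fintype ι]

lemma star_mulVec_dotProduct_mulVec_of_mem_unitaryGroup [DecidableEq ι] {W : Matrix ι ι R}
    (hW : W ∈ unitaryGroup ι R) (x y : ι → R) :
    star (W *ᵥ x) ⬝ᵥ W *ᵥ y = star x ⬝ᵥ y := by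
  rw [star_mulVec, ← dotProduct_mulVec, mulVec_mulVec, ← star_eq_conjTranspose,
    (mem_unitaryGroup_iff').1 hW, one_mulVec]

def entryGram (V : ι → Matrix n n R) (i j i' j' : n) : R :=
  ∑ k, star (V k i j) * V k i' j'

/-- The family `Ṽ` of the statement, with `D = diagonal d`. -/
def gaugeTransform [Fintype n] [DecidableEq n] (W : Matrix ι ι R) (d : n → R)
    (V : ι → Matrix n n R) : ι → Matrix n n R :=
  fun k ↦ (diagonal d)ᴴ * (∑ l, W k l • V l) * diagonal d

lemma entryGram_eq_star_dotProduct (V : ι → Matrix n n R) (i j i' j' : n) :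
    entryGram V i j i' j' = star (fun k ↦ V k i j) ⬝ᵥ fun k ↦ V k i' j' :=
  rfl

lemma entryGram_unitary_mix [DecidableEq ι] {W : Matrix ι ι R} (hW : W ∈ unitaryGroup ι R)
    (V : ι → Matrix n n R) :
    entryGram (fun k ↦ ∑ l, W k l • V l) = entryGram V := by
  have hmix : ∀ i j, (fun k ↦ (∑ l, W k l • V l) i j) = W *ᵥ fun l ↦ V l i j := by
    intro i j; ext k
    simp [Matrix.sum_apply, mulVec, dotProduct]
  ext i j i' j'
  rw [entryGram_eq_star_dotProduct, hmix, hmix,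
    star_mulVec_dotProduct_mulVec_of_mem_unitaryGroup hW, entryGram_eq_star_dotProduct]

variable [Fintype n]

lemma sum_commutator_conjTranspose_apply (V : ι → Matrix n n R) (i j : n) :
    (∑ k, (V k * (V k)ᴴ - (V k)ᴴ * V k)) i j
      = ∑ m, (entryGram V j m i m - entryGram V m i m j) := by
  simp only [Matrix.sum_apply, Matrix.sub_apply, mul_apply, conjTranspose_apply, entryGram,
    Finset.sum_sub_distrib]
  congr 1
  · exact Finset.sum_comm.trans
      (Finset.sum_congr rfl fun _ _ ↦ Finset.sum_congr rfl fun _ _ ↦ mul_comm _ _)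
  · exact Finset.sum_comm

variable [DecidableEq n]

lemma conjTranspose_diagonal_mul_mul_diagonal_apply (d : n → R) (A : Matrix n n R) (i j : n) :
    ((diagonal d)ᴴ * A * diagonal d) i j = star (d i) * A i j * d j := by
  simp [diagonal_conjTranspose, mul_diagonal, diagonal_mul]

lemma entryGram_diagonal_conj (d : n → R) (V : ι → Matrix n n R) (i j i' j' : n) :
    entryGram (fun k ↦ (diagonal d)ᴴ * V k * diagonal d) i j i' j'
      = d i * star (d j) * star (d i') * d j' * entryGram V i j i' j' := by
  simp only [entryGram, conjTranspose_diagonal_mul_mul_diagonal_apply, Finset.mul_sum]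
  refine Finset.sum_congr rfl fun k _ ↦ ?_
  simp only [star_mul', star_star]
  ring

lemma entryGram_gaugeTransform [DecidableEq ι] {W : Matrix ι ι R} (hW : W ∈ unitaryGroup ι R)
    (d : n → R) (V : ι → Matrix n n R) (i j i' j' : n) :
    entryGram (gaugeTransform W d V) i j i' j'
      = d i * star (d j) * star (d i') * d j' * entryGram V i j i' j' := by
  unfold gaugeTransform
  rw [entryGram_diagonal_conj, entryGram_unitary_mix hW]

lemma star_mul_self_vecCons_star {c : R} (hc : star c * c = 1) (i : Fin 2) :
    star (![c, star c] i) * ![c, star c] i = 1 := by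
  fin_cases i
  · exact hc
  · simpa [mul_comm] using hc

variable {d : n → R}

lemma trace_gaugeTransform (W : Matrix ι ι R) (hd : ∀ i, star (d i) * d i = 1)
    {V : ι → Matrix n n R} (hV : ∀ k, (V k).trace = 0) (k : ι) :
    (gaugeTransform W d V k).trace = 0 := by
  have htrace : ∀ A : Matrix n n R, ((diagonal d)ᴴ * A * diagonal d).trace = A.trace := by
    intro A
    refine Finset.sum_congr rfl fun i _ ↦ ?_
    rw [diag_apply, diag_apply, conjTranspose_diagonal_mul_mul_diagonal_apply]
    linear_combination A i i * hd i
  simp only [gaugeTransform, htrace, trace_sum, trace_smul, hV, smul_zero, Finset.sum_const_zero]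

lemma isDiag_sum_commutator_gaugeTransform [DecidableEq ι] {W : Matrix ι ι R}
    (hW : W ∈ unitaryGroup ι R) (hd : ∀ i, star (d i) * d i = 1) {V : ι → Matrix n n R}
    (hV : (∑ k, (V k * (V k)ᴴ - (V k)ᴴ * V k)).IsDiag) :
    let Vt := gaugeTransform W d V
    (∑ k, (Vt k * (Vt k)ᴴ - (Vt k)ᴴ * Vt k)).IsDiag := by
  intro Vt i j hij
  have hphase : ∀ m, entryGram Vt j m i m - entryGram Vt m i m j
      = star (d i) * d j * (entryGram V j m i m - entryGram V m i m j) := by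
    intro m
    simp only [Vt, entryGram_gaugeTransform hW]
    linear_combination (d j * star (d i) * entryGram V j m i m
      - star (d i) * d j * entryGram V m i m j) * hd m
  rw [sum_commutator_conjTranspose_apply, Finset.sum_congr rfl fun m _ ↦ hphase m,
    ← Finset.mul_sum, ← sum_commutator_conjTranspose_apply, hV hij, mul_zero]

end EntryGram

section EntryNorms

variable {ι n : Type*} [Fintype ι]

lemma sum_norm_sq_apply_eq_re_entryGram (V : ι → Matrix n n ℂ) (i j : n) :
    ∑ k, ‖V k i j‖ ^ 2 = (entryGram V i j i j).re := by
  simp only [entryGram, re_sum]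
  refine Finset.sum_congr rfl fun k _ ↦ ?_
  rw [← starRingEnd_apply, conj_mul', ← ofReal_pow, ofReal_re]

variable [Fintype n] [DecidableEq n]

lemma sum_norm_sq_apply_gaugeTransform [DecidableEq ι] {W : Matrix ι ι ℂ}
    (hW : W ∈ unitaryGroup ι ℂ) {d : n → ℂ} (hd : ∀ i, star (d i) * d i = 1)
    (V : ι → Matrix n n ℂ) (i j : n) :
    ∑ k, ‖gaugeTransform W d V k i j‖ ^ 2 = ∑ k, ‖V k i j‖ ^ 2 := by
  rw [sum_norm_sq_apply_eq_re_entryGram, sum_norm_sq_apply_eq_re_entryGram,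
    entryGram_gaugeTransform hW]
  congr 2
  linear_combination (star (d j) * d j * entryGram V i j i j) * hd i + entryGram V i j i j * hd j

end EntryNorms

lemma star_cexp_I_mul_ofReal (θ : ℝ) : star (cexp (I * θ)) = cexp (-(I * θ)) := by
  rw [← starRingEnd_apply, ← exp_conj, map_mul, conj_I, conj_ofReal, neg_mul]

section Qubit

variable {r : ℕ}

lemma SigOf_eq_of_sum_norm_sq_eq {V V' : Fin r → Matrix (Fin 2) (Fin 2) ℂ}
    (h : ∀ i j, ∑ k, ‖V' k i j‖ ^ 2 = ∑ k, ‖V k i j‖ ^ 2) : SigOf V' = SigOf V := by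
  simp only [SigOf, Finset.sum_add_distrib, h]

lemma DeltaOf_eq_of_sum_norm_sq_eq {V V' : Fin r → Matrix (Fin 2) (Fin 2) ℂ}
    (h : ∀ i j, ∑ k, ‖V' k i j‖ ^ 2 = ∑ k, ‖V k i j‖ ^ 2) : DeltaOf V' = DeltaOf V := by
  simp only [DeltaOf, Finset.sum_sub_distrib, h]

lemma deltaOf_eq_of_sum_norm_sq_eq {V V' : Fin r → Matrix (Fin 2) (Fin 2) ℂ}
    (h : ∀ i j, ∑ k, ‖V' k i j‖ ^ 2 = ∑ k, ‖V k i j‖ ^ 2) : deltaOf V' = deltaOf V := by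
  simp only [deltaOf, Finset.sum_sub_distrib, ← Finset.mul_sum, ← Finset.sum_div,
    Finset.sum_add_distrib, h]

variable {W : Matrix (Fin r) (Fin r) ℂ}

lemma z1Of_gaugeTransform (hW : W ∈ unitaryGroup (Fin r) ℂ) (c : ℂ)
    (V : Fin r → Matrix (Fin 2) (Fin 2) ℂ) :
    z1Of (gaugeTransform W ![c, star c] V) = c ^ 4 * z1Of V := by
  change I * entryGram _ 0 1 1 0 = c ^ 4 * (I * entryGram V 0 1 1 0)
  simp only [entryGram_gaugeTransform hW, Matrix.cons_val_zero, Matrix.cons_val_one, star_star]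
  ring

lemma z2Of_gaugeTransform (hW : W ∈ unitaryGroup (Fin r) ℂ) {c : ℂ} (hc : star c * c = 1)
    (V : Fin r → Matrix (Fin 2) (Fin 2) ℂ) :
    z2Of (gaugeTransform W ![c, star c] V) = c ^ 2 * z2Of V := by
  change entryGram _ 0 0 1 0 = c ^ 2 * entryGram V 0 0 1 0
  simp only [entryGram_gaugeTransform hW, Matrix.cons_val_zero, Matrix.cons_val_one, star_star]
  linear_combination c ^ 2 * entryGram V 0 0 1 0 * hc

end Qubit

theorem stmt_9 {r : ℕ} (V : Fin r → Matrix (Fin 2) (Fin 2) ℂ)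
    (htr : ∀ k, (V k).trace = 0)
    (hdiag : (∑ k, (V k * (V k)ᴴ - (V k)ᴴ * V k)).IsDiag)
    (W : Matrix (Fin r) (Fin r) ℂ) (hW : W ∈ Matrix.unitaryGroup (Fin r) ℂ)
    (θ : ℝ)
    (D : Matrix (Fin 2) (Fin 2) ℂ)
    (hD : D = Matrix.diagonal ![Complex.exp (Complex.I * θ), Complex.exp (-(Complex.I * θ))])
    (Vt : Fin r → Matrix (Fin 2) (Fin 2) ℂ)
    (hVt : ∀ k, Vt k = Dᴴ * (∑ l, W k l • V l) * D) :
    (∀ k, (Vt k).trace = 0) ∧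
    (∑ k, (Vt k * (Vt k)ᴴ - (Vt k)ᴴ * Vt k)).IsDiag ∧
    SigOf Vt = SigOf V ∧
    DeltaOf Vt = DeltaOf V ∧
    deltaOf Vt = deltaOf V ∧
    ‖z1Of Vt‖ = ‖z1Of V‖ ∧
    ‖z2Of Vt‖ = ‖z2Of V‖ ∧
    z1Of Vt * ((starRingEnd ℂ) (z2Of Vt)) ^ 2 = z1Of V * ((starRingEnd ℂ) (z2Of V)) ^ 2 := by
  set c := cexp (I * θ)
  have hc : starRingEnd ℂ c * c = 1 := by
    rw [starRingEnd_apply, star_cexp_I_mul_ofReal, ← exp_add, neg_add_cancel, exp_zero]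
  have hc_norm : ‖c‖ = 1 := by
    rw [show c = cexp (θ * I) by rw [mul_comm]]
    exact norm_exp_ofReal_mul_I θ
  have hd := star_mul_self_vecCons_star hc
  obtain rfl : Vt = gaugeTransform W ![c, star c] V := by
    funext k
    rw [hVt, hD, ← star_cexp_I_mul_ofReal]
    rfl
  have hnorm := sum_norm_sq_apply_gaugeTransform hW hd V
  refine ⟨trace_gaugeTransform W hd htr, isDiag_sum_commutator_gaugeTransform hW hd hdiag,
    SigOf_eq_of_sum_norm_sq_eq hnorm, DeltaOf_eq_of_sum_norm_sq_eq hnorm,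
    deltaOf_eq_of_sum_norm_sq_eq hnorm, ?_, ?_, ?_⟩
  · rw [z1Of_gaugeTransform hW, norm_mul, norm_pow, hc_norm, one_pow, one_mul]
  · rw [z2Of_gaugeTransform hW hc, norm_mul, norm_pow, hc_norm, one_pow, one_mul]
  · rw [z1Of_gaugeTransform hW, z2Of_gaugeTransform hW hc, map_mul, map_pow]
    calc c ^ 4 * z1Of V * (starRingEnd ℂ c ^ 2 * starRingEnd ℂ (z2Of V)) ^ 2
        = (starRingEnd ℂ c * c) ^ 4 * (z1Of V * starRingEnd ℂ (z2Of V) ^ 2) := by ring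
      _ = z1Of V * starRingEnd ℂ (z2Of V) ^ 2 := by rw [hc, one_pow, one_mul]
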